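/- arXiv:2110.01751 — 2 statements merged into one kernel-verified Lean document; each statement's English description precedes it below -/
import Mathlib

section
/- For all positive integers m, n, d1, d2 with d1 + d2 ≤ m + n, one has binom(m+n, n+1) - binom(m+n-d1, n+1) - binom(m+n-d2, n+1) + binom(m+n-d1-d2, n+1) ≤ d1 * d2 * binom(m+n-2, n-1). -/
lemma choose_step (s k : ℕ) (hs : 0 < s) :
    ((s).choose (k+1) : ℤ) = ((s-1).choose (k+1) : ℤ) + ((s-1).choose k : ℤ) := by
  obtain ⟨t, rfl⟩ := Nat.exists_eq_succ_of_ne_zero hs.ne'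
  simp [Nat.choose_succ_succ']
  ring

lemma tele : ∀ (a N k : ℕ), a ≤ N →
    (N.choose (k+1) : ℤ) - ((N - a).choose (k+1) : ℤ)
      = ∑ i ∈ Finset.range a, ((N - 1 - i).choose k : ℤ) := by
  intro a
  induction a with
  | zero => simp
  | succ a ih =>
    intro N k h
    rw [Finset.sum_range_succ, ← ih N k (by omega)]
    have key := choose_step (N - a) k (by omega)
    have e1 : N - (a + 1) = N - a - 1 := by omega
    have e2 : N - 1 - a = N - a - 1 := by omega
    rw [e1, e2]
    linarith

/-- For all positive integers `m, n, d1, d2` with `d1 + d2 ≤ m + n`,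
`binom(m+n, n+1) - binom(m+n-d1, n+1) - binom(m+n-d2, n+1) + binom(m+n-d1-d2, n+1)
  ≤ d1 * d2 * binom(m+n-2, n-1)`. -/
theorem stmt_1 (m n d1 d2 : ℕ) (hm : 0 < m) (hn : 0 < n) (hd1 : 0 < d1) (hd2 : 0 < d2)
    (hsum : d1 + d2 ≤ m + n) :
    ((m + n).choose (n + 1) : ℤ) - ((m + n - d1).choose (n + 1) : ℤ)
        - ((m + n - d2).choose (n + 1) : ℤ) + ((m + n - d1 - d2).choose (n + 1) : ℤ)
      ≤ (d1 : ℤ) * d2 * ((m + n - 2).choose (n - 1) : ℤ) := by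
  obtain ⟨t, rfl⟩ := Nat.exists_eq_succ_of_ne_zero hn.ne'
  have h1 := tele d1 (m + (t+1)) (t+1) (by omega)
  have h2 := tele d1 (m + (t+1) - d2) (t+1) (by omega)
  have e : m + (t+1) - d1 - d2 = m + (t+1) - d2 - d1 := by omega
  rw [e]
  have hb : ∀ i ∈ Finset.range d1,
      ((m + (t+1) - 1 - i).choose (t+1) : ℤ) - ((m + (t+1) - d2 - 1 - i).choose (t+1) : ℤ)
        ≤ (d2 : ℤ) * ((m + (t+1) - 2).choose t : ℤ) := by
    intro i hi
    simp only [Finset.mem_range] at hi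
    have h3 := tele d2 (m + (t+1) - 1 - i) t (by omega)
    have e2 : m + (t+1) - 1 - i - d2 = m + (t+1) - d2 - 1 - i := by omega
    rw [e2] at h3
    rw [h3]
    calc ∑ j ∈ Finset.range d2, ((m + (t+1) - 1 - i - 1 - j).choose t : ℤ)
        ≤ ∑ j ∈ Finset.range d2, ((m + (t+1) - 2).choose t : ℤ) := by
          apply Finset.sum_le_sum
          intro j hj
          exact_mod_cast Nat.choose_le_choose t (by omega : m + (t+1) - 1 - i - 1 - j ≤ m + (t+1) - 2)
      _ = (d2 : ℤ) * ((m + (t+1) - 2).choose t : ℤ) := by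
          rw [Finset.sum_const, Finset.card_range]; ring
  have hsumle := Finset.sum_le_sum hb
  rw [Finset.sum_sub_distrib] at hsumle
  rw [Finset.sum_const, Finset.card_range, nsmul_eq_mul] at hsumle
  simp only [Nat.succ_eq_add_one, Nat.add_sub_cancel] at *
  linarith
end

section
/- Let p be a prime and define F(m) = m·p^m + 1 and G(n) = p^n + 1. Then for every positive integer k, setting m = p^k and n = p^k + k, one has F(m) = G(n); consequently gcd(F(m), G(n)) = p^{p^k + k} + 1, so for any ε < log 2 the inequality log gcd(F(m), G(n)) > ε · max(m, n) holds for these pairs (m,n), for all k ≥ 1. -/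
/-- Let `p` be a prime, `F(m) = m * p^m + 1`, `G(n) = p^n + 1`.
For every `k ≥ 1`, with `m = p^k` and `n = p^k + k`: `F(m) = G(n)`, hence
`gcd(F(m), G(n)) = p^(p^k + k) + 1`, and for every `ε < log 2`,
`log gcd(F(m), G(n)) > ε * max(m, n)`. -/
theorem stmt_6 (p : ℕ) (hp : p.Prime) (k : ℕ) (hk : 1 ≤ k) :
    p ^ k * p ^ (p ^ k) + 1 = p ^ (p ^ k + k) + 1 ∧
    Nat.gcd (p ^ k * p ^ (p ^ k) + 1) (p ^ (p ^ k + k) + 1) = p ^ (p ^ k + k) + 1 ∧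
    ∀ ε : ℝ, ε < Real.log 2 →
      ε * (max (p ^ k) (p ^ k + k) : ℕ) <
        Real.log (Nat.gcd (p ^ k * p ^ (p ^ k) + 1) (p ^ (p ^ k + k) + 1) : ℝ) := by
  have heq : p ^ k * p ^ (p ^ k) + 1 = p ^ (p ^ k + k) + 1 := by
    rw [pow_add, mul_comm]
  have hgcd : Nat.gcd (p ^ k * p ^ (p ^ k) + 1) (p ^ (p ^ k + k) + 1)
      = p ^ (p ^ k + k) + 1 := by
    rw [heq, Nat.gcd_self]
  refine ⟨heq, hgcd, fun ε hε => ?_⟩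
  rw [hgcd]
  set N := p ^ k + k with hN
  have hmax : max (p ^ k) (p ^ k + k) = N := max_eq_right (Nat.le_add_right _ _)
  rw [hmax]
  have hNpos : 0 < N := by positivity
  have hNR : (0 : ℝ) < (N : ℝ) := by exact_mod_cast hNpos
  have h1 : ε * (N : ℝ) < Real.log 2 * N := by
    exact mul_lt_mul_of_pos_right hε hNR
  have hp2 : (2 : ℝ) ≤ (p : ℝ) := by exact_mod_cast hp.two_le
  have h2 : Real.log 2 * N ≤ Real.log p * N :=
    mul_le_mul_of_nonneg_right (Real.log_le_log (by norm_num) hp2) hNR.le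
  have hppos : (0 : ℝ) < (p : ℝ) := by
    exact_mod_cast hp.pos
  have h3 : Real.log p * N = Real.log ((p : ℝ) ^ N) := by
    rw [Real.log_pow]; ring
  have h4 : Real.log ((p : ℝ) ^ N) < Real.log ((p : ℝ) ^ N + 1) := by
    apply Real.log_lt_log (by positivity)
    linarith
  calc ε * (N : ℝ) < Real.log 2 * N := h1
    _ ≤ Real.log p * N := h2
    _ = Real.log ((p : ℝ) ^ N) := h3
    _ < Real.log ((p : ℝ) ^ N + 1) := h4
    _ = Real.log (((p ^ N + 1 : ℕ) : ℝ)) := by push_cast; ring_nf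
end
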